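/- Let G and H be groups generated by finite sets X and Y, respectively. If G and H are quasi-isometric, then their isoperimetric spectra are equivalent: f_{G,X} ∼ f_{H,Y}. In particular, the equivalence class of the isoperimetric spectrum of a finitely generated group does not depend on the choice of the finite generating set. -/

import Mathlib

open Function

namespace IsoSpecPaper

variable {ι : Type*} {G : Type*} [Group G]

/-- The (reduced) length of an element of a free group. -/
noncomputable def wnorm (w : FreeGroup ι) : ℕ :=
  @FreeGroup.norm ι (Classical.decEq ι) w

/-- `triv φ k` : the set of words of length at most `k` in the generators
(and their inverses) representing the identity of `G` under the marking `φ`. -/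
noncomputable def triv (φ : FreeGroup ι →* G) (k : ℕ) : Set (FreeGroup ι) :=
  {w | wnorm w ≤ k ∧ φ w = 1}

/-- `AreaLe R w l` : `w` is a product of `l` conjugates of elements of `R` or
their inverses in the free group. -/
def AreaLe (R : Set (FreeGroup ι)) (w : FreeGroup ι) (l : ℕ) : Prop :=
  ∃ L : List (FreeGroup ι × FreeGroup ι), L.length = l ∧
    (∀ p ∈ L, p.2 ∈ R ∨ p.2⁻¹ ∈ R) ∧
    w = (L.map fun p => p.1⁻¹ * p.2 * p.1).prod

/-- The area of `w` with respect to the set of relators `R`. -/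
noncomputable def area (R : Set (FreeGroup ι)) (w : FreeGroup ι) : ℕ :=
  sInf {l | AreaLe R w l}

/-- The isoperimetric spectrum of the marked group `(G, φ)`:
`isoSpec φ k m n = max { area_{S_m}(w) : w ∈ ⟪S_k⟫, ‖w‖ ≤ n }`. -/
noncomputable def isoSpec (φ : FreeGroup ι →* G) (k m n : ℕ) : ℕ :=
  sSup (area (triv φ m) '' {w | w ∈ Subgroup.normalClosure (triv φ k) ∧ wnorm w ≤ n})

/-- The real-valued isoperimetric spectrum. -/
noncomputable def isoSpecR (φ : FreeGroup ι →* G) : ℕ → ℕ → ℕ → ℝ :=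
  fun k m n => (isoSpec φ k m n : ℝ)

/-- The Dehn function of the presentation with relators `R`. -/
noncomputable def dehn (R : Set (FreeGroup ι)) (n : ℕ) : ℕ :=
  sSup (area R '' {w | w ∈ Subgroup.normalClosure R ∧ wnorm w ≤ n})

/-- The quasi-order `f ≼ g` on functions of triples `(k,m,n)` of positive integers
with `m ≥ k`. -/
def SpecLE (f g : ℕ → ℕ → ℕ → ℝ) : Prop :=
  ∃ C : ℕ, 0 < C ∧ ∀ k m n : ℕ, 0 < k → 0 < m → 0 < n → C * k ≤ m →
    f k (C * m) n ≤ C * g (C * k) m (C * n) + C * (n : ℝ) / m + C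

/-- Equivalence of isoperimetric functions: `f ∼ g`. -/
def SpecEquiv (f g : ℕ → ℕ → ℕ → ℝ) : Prop := SpecLE f g ∧ SpecLE g f

/-- The linear spectrum `(k,m,n) ↦ n/m`. -/
noncomputable def linSpec : ℕ → ℕ → ℕ → ℝ := fun _ m n => (n : ℝ) / m

/-- The word length of `g ∈ G` with respect to the marking `φ`. -/
noncomputable def wlen (φ : FreeGroup ι →* G) (g : G) : ℕ :=
  sInf {n | ∃ w : FreeGroup ι, wnorm w = n ∧ φ w = g}

/-- The word metric on `G` with respect to the marking `φ`. -/
noncomputable def wdist (φ : FreeGroup ι →* G) (g h : G) : ℕ := wlen φ (g⁻¹ * h)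

/-- Quasi-isometry of marked groups with respect to their word metrics. -/
noncomputable def QuasiIsometric {H : Type*} [Group H] {κ : Type*}
    (φ : FreeGroup ι →* G) (ψ : FreeGroup κ →* H) : Prop :=
  ∃ L : ℝ, 0 ≤ L ∧ ∃ (α : G → H) (β : H → G),
    (∀ x y : G, (wdist ψ (α x) (α y) : ℝ) ≤ L * wdist φ x y + L) ∧
    (∀ u v : H, (wdist φ (β u) (β v) : ℝ) ≤ L * wdist ψ u v + L) ∧
    (∀ t : H, (wdist ψ (α (β t)) t : ℝ) ≤ L) ∧
    (∀ s : G, (wdist φ (β (α s)) s : ℝ) ≤ L)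

/-- A (combinatorial) geodesic path of length `n` in the Cayley graph of `(G, φ)`:
consecutive vertices are at distance at most `1` and the endpoints are at
distance exactly `n`. -/
noncomputable def IsGeodesic (φ : FreeGroup ι →* G) {n : ℕ} (p : Fin (n + 1) → G) : Prop :=
  (∀ i : Fin n, wdist φ (p i.castSucc) (p i.succ) ≤ 1) ∧
  wdist φ (p 0) (p (Fin.last n)) = n

/-- Every vertex of the path `p` lies within distance `δ` of the set `A`. -/
noncomputable def ThinAt (φ : FreeGroup ι →* G) (δ : ℝ) {n : ℕ}
    (p : Fin (n + 1) → G) (A : Set G) : Prop :=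
  ∀ i, ∃ a ∈ A, (wdist φ (p i) a : ℝ) ≤ δ

/-- The Cayley graph of `(G, φ)` is `δ`-hyperbolic: every geodesic triangle is `δ`-thin. -/
noncomputable def HypConst (φ : FreeGroup ι →* G) (δ : ℝ) : Prop :=
  ∀ (n₁ n₂ n₃ : ℕ) (p : Fin (n₁ + 1) → G) (q : Fin (n₂ + 1) → G) (r : Fin (n₃ + 1) → G),
    IsGeodesic φ p → IsGeodesic φ q → IsGeodesic φ r →
    p (Fin.last n₁) = q 0 → q (Fin.last n₂) = r 0 → r (Fin.last n₃) = p 0 →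
    ThinAt φ δ p (Set.range q ∪ Set.range r) ∧
    ThinAt φ δ q (Set.range r ∪ Set.range p) ∧
    ThinAt φ δ r (Set.range p ∪ Set.range q)

/-- The marked group `(G, φ)` is hyperbolic. -/
noncomputable def IsHyperbolic (φ : FreeGroup ι →* G) : Prop :=
  ∃ δ : ℝ, 0 ≤ δ ∧ HypConst φ δ

/-- `G` (marked by `φ`) is a limit (direct limit) of hyperbolic groups. -/
noncomputable def LimitOfHyperbolic (φ : FreeGroup ι →* G) : Prop :=
  Surjective φ ∧ ∃ R : ℕ → Set (FreeGroup ι),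
    (∀ i j, i ≤ j → R i ⊆ R j) ∧
    φ.ker = Subgroup.normalClosure (⋃ i, R i) ∧
    ∀ i, IsHyperbolic (QuotientGroup.mk' (Subgroup.normalClosure (R i)))

/-- `G` (marked by `φ`) is well-approximated by hyperbolic groups. -/
noncomputable def WellApproximated (φ : FreeGroup ι →* G) : Prop :=
  Surjective φ ∧ ∃ R : ℕ → Set (FreeGroup ι),
    (∀ i j, i ≤ j → R i ⊆ R j) ∧
    φ.ker = Subgroup.normalClosure (⋃ i, R i) ∧
    (∀ i, IsHyperbolic (QuotientGroup.mk' (Subgroup.normalClosure (R i)))) ∧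
    ∃ C : ℕ, 0 < C ∧ ∀ i : ℕ, 0 < i →
      (∀ w : FreeGroup ι, wnorm w ≤ i → φ w = 1 →
        w ∈ Subgroup.normalClosure (R i)) ∧
      HypConst (QuotientGroup.mk' (Subgroup.normalClosure (R i))) ((C * i : ℕ) : ℝ)

/-! A coarse map `A : G → H` transfers words: read a word of `G` as a path in the Cayley graph,
map its vertices by `A` and join consecutive images by geodesic words of `H`. This transfer is a
cocycle, so it carries relations of length `≤ k` to relations of length `≤ C k`, and van Kampen
diagrams to van Kampen diagrams with the same number of cells. Given `w ∈ ⟪S_k(G)⟫`, fill its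
transfer in `H` by `f_H(C k, m, C n)` cells of `S_m(H)`, carry that filling back through a coarse
inverse `B`, and fill the strip between `w` and its round trip under `B ∘ A` by one cell of
perimeter `≤ C m` for every `m` letters of `w`; the strip costs the extra `n / m + 1`. -/

lemma wnorm_eq_norm [DecidableEq ι] (w : FreeGroup ι) : wnorm w = w.norm := by
  unfold wnorm
  congr

lemma wnorm_eq_length_toWord [DecidableEq ι] (w : FreeGroup ι) : wnorm w = w.toWord.length :=
  wnorm_eq_norm w

@[simp]
lemma wnorm_one : wnorm (1 : FreeGroup ι) = 0 := by
  classical rw [wnorm_eq_norm, FreeGroup.norm_one]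

@[simp]
lemma wnorm_inv (w : FreeGroup ι) : wnorm w⁻¹ = wnorm w := by
  classical rw [wnorm_eq_norm, wnorm_eq_norm, FreeGroup.norm_inv_eq]

lemma wnorm_mul_le (u v : FreeGroup ι) : wnorm (u * v) ≤ wnorm u + wnorm v := by
  classical simpa only [wnorm_eq_norm] using FreeGroup.norm_mul_le u v

lemma wnorm_mk_le (l : List (ι × Bool)) : wnorm (FreeGroup.mk l) ≤ l.length := by
  classical simpa only [wnorm_eq_norm] using FreeGroup.norm_mk_le

@[simp]
lemma wnorm_of (i : ι) : wnorm (FreeGroup.of i) = 1 := by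
  classical rw [wnorm_eq_norm, FreeGroup.norm_of]

lemma finite_setOf_wnorm_le [Finite ι] (n : ℕ) : {w : FreeGroup ι | wnorm w ≤ n}.Finite := by
  classical
  refine (List.finite_length_le _ n).preimage FreeGroup.toWord_injective.injOn |>.subset ?_
  intro w hw
  simpa [wnorm_eq_length_toWord] using hw

section WordMetric

variable (φ : FreeGroup ι →* G)

lemma wlen_map_le (w : FreeGroup ι) : wlen φ (φ w) ≤ wnorm w :=
  Nat.sInf_le ⟨w, rfl, rfl⟩

lemma exists_shortest_word (hφ : Surjective φ) (g : G) :
    ∃ w : FreeGroup ι, φ w = g ∧ wnorm w = wlen φ g := by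
  obtain ⟨w, hw⟩ := hφ g
  have hne : {n | ∃ w, wnorm w = n ∧ φ w = g}.Nonempty := ⟨_, w, rfl, hw⟩
  obtain ⟨w', hw'len, hw'⟩ := Nat.sInf_mem hne
  exact ⟨w', hw', hw'len⟩

lemma wlen_inv (g : G) : wlen φ g⁻¹ = wlen φ g := by
  unfold wlen
  congr 1
  ext n
  constructor <;> rintro ⟨w, rfl, hw⟩ <;> exact ⟨w⁻¹, wnorm_inv w, by simp [hw]⟩

lemma wdist_comm (g h : G) : wdist φ g h = wdist φ h g := by
  rw [wdist, wdist, ← wlen_inv, mul_inv_rev, inv_inv]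

lemma wdist_mul_of_generator_le_one (g : G) (i : ι) :
    wdist φ g (g * φ (FreeGroup.of i)) ≤ 1 := by
  simpa [wdist] using wlen_map_le φ (FreeGroup.of i)

end WordMetric

section Area

variable {R : Set (FreeGroup ι)} {u v w : FreeGroup ι} {l l' : ℕ}

lemma AreaLe.one : AreaLe R 1 0 :=
  ⟨[], rfl, by simp, by simp⟩

lemma AreaLe.conj_single {r : FreeGroup ι} (hr : r ∈ R ∨ r⁻¹ ∈ R) (f : FreeGroup ι) :
    AreaLe R (f⁻¹ * r * f) 1 :=
  ⟨[(f, r)], rfl, by simpa using hr, by simp⟩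

lemma AreaLe.single {r : FreeGroup ι} (hr : r ∈ R) : AreaLe R r 1 := by
  simpa using AreaLe.conj_single (Or.inl hr) 1

lemma AreaLe.mul (hu : AreaLe R u l) (hv : AreaLe R v l') : AreaLe R (u * v) (l + l') := by
  obtain ⟨Lu, rfl, hRu, rfl⟩ := hu
  obtain ⟨Lv, rfl, hRv, rfl⟩ := hv
  exact ⟨Lu ++ Lv, List.length_append,
    fun p hp => (List.mem_append.mp hp).elim (hRu p) (hRv p), by simp⟩

lemma AreaLe.conj (hu : AreaLe R u l) (f : FreeGroup ι) : AreaLe R (f * u * f⁻¹) l := by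
  obtain ⟨L, rfl, hR, rfl⟩ := hu
  refine ⟨L.map fun p => (p.1 * f⁻¹, p.2), by simp, ?_, ?_⟩
  · intro p hp
    obtain ⟨q, hq, rfl⟩ := List.mem_map.mp hp
    exact hR q hq
  clear hR
  induction L with
  | nil => simp
  | cons p L ih => simp only [List.map_cons, List.prod_cons, ← ih]; group

lemma AreaLe.mem_normalClosure (hu : AreaLe R u l) : u ∈ Subgroup.normalClosure R := by
  obtain ⟨L, rfl, hR, rfl⟩ := hu
  refine list_prod_mem fun x hx => ?_
  obtain ⟨p, hp, rfl⟩ := List.mem_map.mp hx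
  have hmem : p.2 ∈ Subgroup.normalClosure R := by
    rcases hR p hp with h | h
    · exact Subgroup.subset_normalClosure h
    · simpa using inv_mem (Subgroup.subset_normalClosure h)
  simpa using Subgroup.normalClosure_normal.conj_mem _ hmem p.1⁻¹

lemma exists_areaLe_of_mem_normalClosure (hu : u ∈ Subgroup.normalClosure R) :
    ∃ l, AreaLe R u l := by
  induction hu using Subgroup.closure_induction'' with
  | mem x hx =>
    obtain ⟨r, hr, hconj⟩ := Group.mem_conjugatesOfSet_iff.mp hx
    obtain ⟨f, rfl⟩ := isConj_iff.mp hconj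
    exact ⟨1, by simpa using AreaLe.conj_single (Or.inl hr) f⁻¹⟩
  | inv_mem x hx =>
    obtain ⟨r, hr, hconj⟩ := Group.mem_conjugatesOfSet_iff.mp hx
    obtain ⟨f, rfl⟩ := isConj_iff.mp hconj
    exact ⟨1, by simpa [mul_assoc] using AreaLe.conj_single (r := r⁻¹) (by simp [hr]) f⁻¹⟩
  | one => exact ⟨0, AreaLe.one⟩
  | mul x y _ _ hx hy =>
    obtain ⟨lx, hx⟩ := hx
    obtain ⟨ly, hy⟩ := hy
    exact ⟨lx + ly, hx.mul hy⟩

lemma areaLe_area (hu : u ∈ Subgroup.normalClosure R) : AreaLe R u (area R u) :=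
  Nat.sInf_mem (exists_areaLe_of_mem_normalClosure hu)

lemma area_le_of_areaLe (hu : AreaLe R u l) : area R u ≤ l :=
  Nat.sInf_le hu

end Area

section Spectrum

variable (φ : FreeGroup ι →* G)

lemma triv_mono {k k' : ℕ} (h : k ≤ k') : triv φ k ⊆ triv φ k' :=
  fun _ hw => ⟨hw.1.trans h, hw.2⟩

lemma map_eq_one_of_mem_normalClosure_triv {k : ℕ} {w : FreeGroup ι}
    (hw : w ∈ Subgroup.normalClosure (triv φ k)) : φ w = 1 :=
  Subgroup.normalClosure_le_normal (N := φ.ker) (fun _ hx => hx.2) hw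

lemma isoSpec_le {k m n N : ℕ}
    (h : ∀ w ∈ Subgroup.normalClosure (triv φ k), wnorm w ≤ n → area (triv φ m) w ≤ N) :
    isoSpec φ k m n ≤ N :=
  csSup_le ⟨_, 1, ⟨one_mem _, by simp⟩, rfl⟩ fun _ ⟨w, ⟨hw, hwn⟩, hN⟩ => hN ▸ h w hw hwn

lemma area_le_isoSpec [Finite ι] {k m n : ℕ} {w : FreeGroup ι}
    (hw : w ∈ Subgroup.normalClosure (triv φ k)) (hwn : wnorm w ≤ n) :
    area (triv φ m) w ≤ isoSpec φ k m n :=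
  le_csSup (((finite_setOf_wnorm_le n).subset fun _ hv => hv.2).image _).bddAbove
    ⟨w, ⟨hw, hwn⟩, rfl⟩

end Spectrum

section Transfer

variable {κ : Type*} (φ : FreeGroup ι →* G) (e : G → ι → FreeGroup κ)

noncomputable def transferHom : FreeGroup ι →* FreeGroup κ ≀ᵣ G :=
  FreeGroup.lift fun i => ⟨fun x => e x⁻¹ i, φ (FreeGroup.of i)⟩

/-- The word read along the path in the Cayley graph of `(G, φ)` that starts at `g` and follows
`u`, when the edge from `x` labelled `i` reads `e x i`. The wreath product translates on the left,
so this word sits at the coordinate `g⁻¹`. -/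
noncomputable def transfer (g : G) (u : FreeGroup ι) : FreeGroup κ :=
  (transferHom φ e u).left g⁻¹

lemma transferHom_right (u : FreeGroup ι) : (transferHom φ e u).right = φ u := by
  have : RegularWreathProduct.rightHom.comp (transferHom φ e) = φ :=
    FreeGroup.ext_hom _ _ fun i => by simp [transferHom, RegularWreathProduct.rightHom]
  exact DFunLike.congr_fun this u

@[simp]
lemma transfer_of (g : G) (i : ι) : transfer φ e g (FreeGroup.of i) = e g i := by
  simp [transfer, transferHom]

@[simp]
lemma transfer_one (g : G) : transfer φ e g 1 = 1 := by
  simp [transfer]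

lemma transfer_mul (g : G) (u v : FreeGroup ι) :
    transfer φ e g (u * v) = transfer φ e g u * transfer φ e (g * φ u) v := by
  simp [transfer, transferHom_right]

lemma transfer_inv (g : G) (u : FreeGroup ι) :
    transfer φ e g u⁻¹ = (transfer φ e (g * (φ u)⁻¹) u)⁻¹ := by
  have h := transfer_mul φ e g u⁻¹ u
  rw [inv_mul_cancel, transfer_one, map_inv] at h
  exact eq_inv_of_mul_eq_one_left h.symm

lemma transfer_conj_of_map_eq_one {s : FreeGroup ι} (hs : φ s = 1) (g : G) (f : FreeGroup ι) :
    transfer φ e g (f⁻¹ * s * f) =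
      (transfer φ e (g * (φ f)⁻¹) f)⁻¹ * transfer φ e (g * (φ f)⁻¹) s *
        transfer φ e (g * (φ f)⁻¹) f := by
  simp [transfer_mul, transfer_inv, hs]

lemma map_transfer {H : Type*} [Group H] (ψ : FreeGroup κ →* H) (A : G → H)
    (he : ∀ g i, ψ (e g i) = (A g)⁻¹ * A (g * φ (FreeGroup.of i))) (g : G) (u : FreeGroup ι) :
    ψ (transfer φ e g u) = (A g)⁻¹ * A (g * φ u) := by
  induction u generalizing g with
  | C1 => simp
  | of i => simp [he]
  | inv_of i _ => simp [transfer_inv, he]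
  | mul u v hu hv => simp [transfer_mul, hu, hv, mul_assoc]

lemma wnorm_transfer_le {K : ℕ} (he : ∀ g i, wnorm (e g i) ≤ K) (g : G) (u : FreeGroup ι) :
    wnorm (transfer φ e g u) ≤ K * wnorm u := by
  classical
  suffices h : ∀ (l : List (ι × Bool)) g, wnorm (transfer φ e g (FreeGroup.mk l)) ≤ K * l.length by
    simpa [wnorm_eq_length_toWord u, FreeGroup.mk_toWord] using h u.toWord g
  intro l
  induction l with
  | nil => simp [← FreeGroup.one_eq_mk]
  | cons z l ih =>
    intro g
    have hz : wnorm (transfer φ e g (FreeGroup.mk [z])) ≤ K := by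
      obtain ⟨i, _ | _⟩ := z
      · change wnorm (transfer φ e g (FreeGroup.of i)⁻¹) ≤ K
        simpa [transfer_inv] using he _ i
      · change wnorm (transfer φ e g (FreeGroup.of i)) ≤ K
        simpa using he g i
    rw [← List.singleton_append, ← FreeGroup.mul_mk, transfer_mul]
    calc _ ≤ _ := wnorm_mul_le _ _
      _ ≤ K + K * l.length := add_le_add hz (ih _)
      _ = K * ([z] ++ l).length := by simp; ring

lemma areaLe_transfer {R : Set (FreeGroup ι)} {T : Set (FreeGroup κ)} (hR : ∀ r ∈ R, φ r = 1)
    (hT : ∀ r ∈ R, ∀ g, transfer φ e g r ∈ T) {w : FreeGroup ι} {l : ℕ} (hw : AreaLe R w l)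
    (g : G) : AreaLe T (transfer φ e g w) l := by
  obtain ⟨L, rfl, hL, rfl⟩ := hw
  induction L generalizing g with
  | nil => simpa using AreaLe.one
  | cons p L ih =>
    obtain ⟨hp, hpT⟩ : φ p.2 = 1 ∧ ∀ g, transfer φ e g p.2 ∈ T ∨ (transfer φ e g p.2)⁻¹ ∈ T := by
      rcases hL p List.mem_cons_self with h | h
      · exact ⟨hR _ h, fun g => Or.inl (hT _ h g)⟩
      · have hp : φ p.2 = 1 := by simpa using hR _ h
        exact ⟨hp, fun g => Or.inr (by simpa [transfer_inv, hp] using hT _ h g)⟩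
    have hconj : φ (p.1⁻¹ * p.2 * p.1) = 1 := by simp [hp]
    rw [List.map_cons, List.prod_cons, transfer_mul, hconj, mul_one,
      transfer_conj_of_map_eq_one φ e hp, List.length_cons, add_comm]
    exact (AreaLe.conj_single (hpT _) _).mul (ih g fun q hq => hL q (List.mem_cons_of_mem p hq))

end Transfer

section Strip

variable (φ : FreeGroup ι →* G)

/-- The strip lemma: cut the path into pieces of length `m`, each bounding one cell. -/
theorem areaLe_of_cocycle {R : Set (FreeGroup ι)} {m : ℕ} (hm : 0 < m)
    (τ : G → FreeGroup ι → FreeGroup ι)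
    (hτ : ∀ g u v, τ g (u * v) = u * τ (g * φ u) v * u⁻¹ * τ g u)
    (hR : ∀ g u, wnorm u ≤ m → τ g u ∈ R) (l : List (ι × Bool)) (g : G) :
    AreaLe R (τ g (FreeGroup.mk l)) (l.length / m + 1) := by
  by_cases hl : l.length < m
  · rw [Nat.div_eq_of_lt hl]
    exact AreaLe.single (hR g _ ((wnorm_mk_le l).trans hl.le))
  · have hdiv : l.length / m + 1 = (l.drop m).length / m + 1 + 1 := by
      rw [List.length_drop, ← Nat.add_div_right (l.length - m) hm,
        Nat.sub_add_cancel (not_lt.mp hl)]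
    have hsplit : FreeGroup.mk l = FreeGroup.mk (l.take m) * FreeGroup.mk (l.drop m) := by
      rw [FreeGroup.mul_mk, List.take_append_drop]
    rw [hdiv, hsplit, hτ]
    refine ((areaLe_of_cocycle hm τ hτ hR (l.drop m) _).conj _).mul (AreaLe.single (hR g _ ?_))
    exact (wnorm_mk_le _).trans (by simp)
termination_by l.length
decreasing_by simp; omega

end Strip

section CoarseMaps

variable {κ H : Type*} [Group H] (φ : FreeGroup ι →* G) (ψ : FreeGroup κ →* H)
  {A : G → H} {B : H → G} {eA : G → ι → FreeGroup κ} {eB : H → κ → FreeGroup ι}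
  {q : G → FreeGroup ι}

lemma areaLe_transfer_triv (heA : ∀ g i, ψ (eA g i) = (A g)⁻¹ * A (g * φ (FreeGroup.of i)))
    {K : ℕ} (hK : ∀ g i, wnorm (eA g i) ≤ K) {k M l : ℕ} (hkM : K * k ≤ M) {w : FreeGroup ι}
    (hw : AreaLe (triv φ k) w l) (g : G) : AreaLe (triv ψ M) (transfer φ eA g w) l := by
  refine areaLe_transfer φ eA (fun r hr => hr.2) (fun r hr g => ?_) hw g
  constructor
  · exact (wnorm_transfer_le φ eA hK g r).trans ((Nat.mul_le_mul_left K hr.1).trans hkM)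
  · simp [map_transfer φ eA ψ A heA, hr.2]

variable (A B eA eB q)

noncomputable def roundTrip (g : G) (u : FreeGroup ι) : FreeGroup ι :=
  transfer ψ eB (A g) (transfer φ eA g u)

/-- The boundary of the strip between the path `u` from `g` and its image under `B ∘ A`,
joined at both ends by the words `q`. -/
noncomputable def stripWord (g : G) (u : FreeGroup ι) : FreeGroup ι :=
  u * q (g * φ u) * (roundTrip φ ψ A eA eB g u)⁻¹ * (q g)⁻¹

variable {A B eA eB q}
variable (heA : ∀ g i, ψ (eA g i) = (A g)⁻¹ * A (g * φ (FreeGroup.of i)))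
  (heB : ∀ h j, φ (eB h j) = (B h)⁻¹ * B (h * ψ (FreeGroup.of j)))
  (hq : ∀ g, φ (q g) = g⁻¹ * B (A g))
include heA

lemma roundTrip_mul (g : G) (u v : FreeGroup ι) :
    roundTrip φ ψ A eA eB g (u * v) =
      roundTrip φ ψ A eA eB g u * roundTrip φ ψ A eA eB (g * φ u) v := by
  simp [roundTrip, transfer_mul, map_transfer φ eA ψ A heA]

lemma stripWord_mul (g : G) (u v : FreeGroup ι) :
    stripWord φ ψ A eA eB q g (u * v) =
      u * stripWord φ ψ A eA eB q (g * φ u) v * u⁻¹ * stripWord φ ψ A eA eB q g u := by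
  simp only [stripWord, roundTrip_mul φ ψ heA, map_mul, mul_assoc]
  group

include heB hq in
lemma map_stripWord (g : G) (u : FreeGroup ι) : φ (stripWord φ ψ A eA eB q g u) = 1 := by
  simp [stripWord, roundTrip, map_transfer ψ eB φ B heB, map_transfer φ eA ψ A heA, hq]
  group

variable {K : ℕ} (hKA : ∀ g i, wnorm (eA g i) ≤ K) (hKB : ∀ h j, wnorm (eB h j) ≤ K)
  (hKq : ∀ g, wnorm (q g) ≤ K)
include heB hq hKA hKB hKq

lemma stripWord_mem_triv {m : ℕ} (hm : 0 < m) (g : G) {u : FreeGroup ι} (hu : wnorm u ≤ m) :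
    stripWord φ ψ A eA eB q g u ∈ triv φ ((K + 1) ^ 2 * m) := by
  refine ⟨?_, map_stripWord φ ψ heA heB hq g u⟩
  have hD : wnorm (roundTrip φ ψ A eA eB g u) ≤ K * (K * m) :=
    (wnorm_transfer_le ψ eB hKB _ _).trans <| Nat.mul_le_mul_left K <|
      (wnorm_transfer_le φ eA hKA g u).trans (Nat.mul_le_mul_left K hu)
  calc wnorm (stripWord φ ψ A eA eB q g u)
      ≤ wnorm u + wnorm (q (g * φ u)) + wnorm (roundTrip φ ψ A eA eB g u) + wnorm (q g) :=
        (wnorm_mul_le _ _).trans <| add_le_add ((wnorm_mul_le _ _).trans <|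
          add_le_add (wnorm_mul_le _ _) (wnorm_inv _).le) (wnorm_inv _).le
    _ ≤ m + K + K * (K * m) + K := by gcongr <;> apply_assumption
    _ ≤ (K + 1) ^ 2 * m := by nlinarith

theorem areaLe_of_areaLe_roundTrip {m a : ℕ} (hm : 0 < m) {w : FreeGroup ι} (hw : φ w = 1)
    (g : G) (hD : AreaLe (triv φ ((K + 1) ^ 2 * m)) (roundTrip φ ψ A eA eB g w) a) :
    AreaLe (triv φ ((K + 1) ^ 2 * m)) w (wnorm w / m + 1 + a) := by
  classical
  have hstrip := areaLe_of_cocycle φ hm _ (stripWord_mul φ ψ heA)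
    (stripWord_mem_triv φ ψ heA heB hq hKA hKB hKq hm) w.toWord g
  rw [FreeGroup.mk_toWord, ← wnorm_eq_length_toWord] at hstrip
  have hw_eq :
      w = stripWord φ ψ A eA eB q g w * (q g * roundTrip φ ψ A eA eB g w * (q g)⁻¹) := by
    simp only [stripWord, hw, mul_one]
    group
  have hfill := hstrip.mul (hD.conj (q g))
  rwa [← hw_eq] at hfill

theorem area_le_isoSpec_add_div [Finite κ] {k m n : ℕ} (hm : 0 < m) (hkm : (K + 1) ^ 2 * k ≤ m)
    {w : FreeGroup ι} (hw : w ∈ Subgroup.normalClosure (triv φ k)) (hwn : wnorm w ≤ n) :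
    area (triv φ ((K + 1) ^ 2 * m)) w ≤
      isoSpec ψ ((K + 1) ^ 2 * k) m ((K + 1) ^ 2 * n) + n / m + 1 := by
  have hKC : K ≤ (K + 1) ^ 2 := by nlinarith
  obtain ⟨l, hl⟩ := exists_areaLe_of_mem_normalClosure hw
  set w' := transfer φ eA 1 w
  have hw'k : w' ∈ Subgroup.normalClosure (triv ψ ((K + 1) ^ 2 * k)) :=
    (areaLe_transfer_triv φ ψ heA hKA (Nat.mul_le_mul_right k hKC) hl 1).mem_normalClosure
  have hw'm : w' ∈ Subgroup.normalClosure (triv ψ m) :=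
    Subgroup.normalClosure_mono (triv_mono ψ hkm) hw'k
  have hN : area (triv ψ m) w' ≤ isoSpec ψ ((K + 1) ^ 2 * k) m ((K + 1) ^ 2 * n) :=
    area_le_isoSpec ψ hw'k <| (wnorm_transfer_le φ eA hKA 1 w).trans <| Nat.mul_le_mul hKC hwn
  have hD := areaLe_transfer_triv ψ φ heB hKB (Nat.mul_le_mul_right m hKC) (areaLe_area hw'm)
    (A 1)
  have hfill := areaLe_of_areaLe_roundTrip φ ψ heA heB hq hKA hKB hKq hm
    (map_eq_one_of_mem_normalClosure_triv φ hw) 1 hD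
  calc area (triv φ ((K + 1) ^ 2 * m)) w ≤ wnorm w / m + 1 + area (triv ψ m) w' :=
        area_le_of_areaLe hfill
    _ ≤ _ := by have := Nat.div_le_div_right (c := m) hwn; omega

end CoarseMaps

lemma specLE_of_le_add_div {f g : ℕ → ℕ → ℕ → ℕ} {C : ℕ} (hC : 0 < C)
    (h : ∀ k m n, 0 < k → 0 < m → 0 < n → C * k ≤ m →
      f k (C * m) n ≤ g (C * k) m (C * n) + n / m + 1) :
    SpecLE (fun k m n => (f k m n : ℝ)) (fun k m n => (g k m n : ℝ)) := by
  refine ⟨C, hC, fun k m n hk hm hn hkm => ?_⟩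
  have hC1 : (1 : ℝ) ≤ C := by exact_mod_cast hC
  have hfg : (f k (C * m) n : ℝ) ≤ g (C * k) m (C * n) + (n : ℝ) / m + 1 :=
    calc (f k (C * m) n : ℝ) ≤ ((g (C * k) m (C * n) + n / m + 1 : ℕ) : ℝ) := by
          exact_mod_cast h k m n hk hm hn hkm
      _ ≤ _ := by push_cast; gcongr; exact Nat.cast_div_le
  calc (f k (C * m) n : ℝ) ≤ g (C * k) m (C * n) + (n : ℝ) / m + 1 := hfg
    _ ≤ C * (g (C * k) m (C * n) + (n : ℝ) / m + 1) := le_mul_of_one_le_left (by positivity) hC1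
    _ = _ := by ring

section QuasiIsometry

variable {κ H : Type*} [Group H] (φ : FreeGroup ι →* G) (ψ : FreeGroup κ →* H)

lemma wnorm_shortest_word_le {ρ : H → FreeGroup κ} (hρ : ∀ h, wnorm (ρ h) = wlen ψ h)
    {A : G → H} {L : ℝ}
    (hA : ∀ x y, (wdist ψ (A x) (A y) : ℝ) ≤ L * wdist φ x y + L) {x y : G}
    (hxy : wdist φ x y ≤ 1) : wnorm (ρ ((A x)⁻¹ * A y)) ≤ 2 * ⌈L⌉₊ := by
  rw [hρ]
  have hxy' : (wdist φ x y : ℝ) ≤ 1 := by exact_mod_cast hxy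
  have hAxy : (wdist ψ (A x) (A y) : ℝ) ≤ 2 * ⌈L⌉₊ := by
    nlinarith [hA x y, Nat.le_ceil L]
  exact_mod_cast hAxy

theorem specLE_isoSpecR_of_quasiRetraction [Finite κ] (hφ : Surjective φ) (hψ : Surjective ψ)
    {L : ℝ} (A : G → H) (B : H → G)
    (hA : ∀ x y, (wdist ψ (A x) (A y) : ℝ) ≤ L * wdist φ x y + L)
    (hB : ∀ u v, (wdist φ (B u) (B v) : ℝ) ≤ L * wdist ψ u v + L)
    (hBA : ∀ s, (wdist φ (B (A s)) s : ℝ) ≤ L) :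
    SpecLE (isoSpecR φ) (isoSpecR ψ) := by
  choose ρG hρG using exists_shortest_word φ hφ
  choose ρH hρH using exists_shortest_word ψ hψ
  set K := 2 * ⌈L⌉₊
  let eA : G → ι → FreeGroup κ := fun g i => ρH ((A g)⁻¹ * A (g * φ (.of i)))
  let eB : H → κ → FreeGroup ι := fun h j => ρG ((B h)⁻¹ * B (h * ψ (.of j)))
  let q : G → FreeGroup ι := fun g => ρG (g⁻¹ * B (A g))
  have heA : ∀ g i, ψ (eA g i) = (A g)⁻¹ * A (g * φ (.of i)) := fun _ _ => (hρH _).1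
  have heB : ∀ h j, φ (eB h j) = (B h)⁻¹ * B (h * ψ (.of j)) := fun _ _ => (hρG _).1
  have hq : ∀ g, φ (q g) = g⁻¹ * B (A g) := fun _ => (hρG _).1
  have hKA : ∀ g i, wnorm (eA g i) ≤ K := fun g i =>
    wnorm_shortest_word_le φ ψ (fun _ => (hρH _).2) hA (wdist_mul_of_generator_le_one φ g i)
  have hKB : ∀ h j, wnorm (eB h j) ≤ K := fun h j =>
    wnorm_shortest_word_le ψ φ (fun _ => (hρG _).2) hB (wdist_mul_of_generator_le_one ψ h j)
  have hKq : ∀ g, wnorm (q g) ≤ K := fun g => by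
    have hBAg : (wdist φ g (B (A g)) : ℝ) ≤ K := by
      rw [wdist_comm]; push_cast [K]; linarith [hBA g, Nat.le_ceil L]
    exact (hρG _).2.trans_le (by exact_mod_cast hBAg)
  refine specLE_of_le_add_div (C := (K + 1) ^ 2) (by positivity) fun k m n _ hm _ hkm =>
    isoSpec_le φ fun w hw hwn => ?_
  exact area_le_isoSpec_add_div φ ψ heA heB hq hKA hKB hKq hm hkm hw hwn

end QuasiIsometry

theorem isoSpec_equiv_of_quasiIsometric {G H : Type} [Group G] [Group H] {a b : ℕ}
    (φ : FreeGroup (Fin a) →* G) (ψ : FreeGroup (Fin b) →* H)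
    (hφ : Surjective φ) (hψ : Surjective ψ)
    (hQI : QuasiIsometric φ ψ) :
    SpecEquiv (isoSpecR φ) (isoSpecR ψ) := by
  obtain ⟨L, -, α, β, hα, hβ, hαβ, hβα⟩ := hQI
  exact ⟨specLE_isoSpecR_of_quasiRetraction φ ψ hφ hψ α β hα hβ hβα,
    specLE_isoSpecR_of_quasiRetraction ψ φ hψ hφ β α hβ hα hαβ⟩

end IsoSpecPaper
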